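/- arXiv:2209.01179 — 4 statements merged into one kernel-verified Lean document; each statement's English description precedes it below -/
import Mathlib

section
/- Speculative non-interference (SNI) is preserved under composition in the following direction: if a combined semantics is well-formed (in particular, the x-projection of its behavior equals the behavior of the x-component), and a program violates SNI with respect to the x-component semantics, then it violates SNI with respect to the combined semantics, provided the x-projection of traces commutes with the non-speculative projection. -/
/-- Speculative non-interference for a (deterministic) behavior function `beh`, relative to
    a low-equivalence `equiv` on configurations and a non-speculative projection `nsp`. -/
def SNI {S T : Type*} (equiv : S → S → Prop) (nsp : T → T) (beh : S → T) : Prop :=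
  ∀ σ1 σ2, equiv σ1 σ2 → nsp (beh σ1) = nsp (beh σ2) → beh σ1 = beh σ2

/-- If the composition is well-formed (the x-projection of the combined behavior is the
    x-component behavior) and the x-projection commutes with the non-speculative projection
    and does not affect non-speculative observations, then a violation of SNI for the
    x-component implies a violation of SNI for the combined semantics. -/
theorem not_SNI_comp_of_not_SNI_component {S T : Type*}
    (equiv : S → S → Prop) (nsp πx : T → T) (beh_x beh_xy : S → T)
    (hA : ∀ σ, beh_x σ = πx (beh_xy σ))
    (hB1 : ∀ t, nsp (πx t) = πx (nsp t))
    (hB2 : ∀ t, nsp (πx t) = nsp t) :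
    ¬ SNI equiv nsp beh_x → ¬ SNI equiv nsp beh_xy := by
  intro hx hxy
  apply hx
  intro σ1 σ2 heq hnsp
  have h : nsp (beh_xy σ1) = nsp (beh_xy σ2) := by
    rw [← hB2 (beh_xy σ1), ← hB2 (beh_xy σ2), ← hA, ← hA]; exact hnsp
  have := hxy σ1 σ2 heq h
  rw [hA, hA, this]
end

section
/- Under a well-formed composition, if a program satisfies SNI with respect to the combined semantics, then it satisfies SNI with respect to each of the two component semantics. -/
/-- Under a well-formed composition, SNI for the combined semantics implies SNI for
    each of the two component semantics. -/
theorem SNI_components_of_SNI_comp {S T : Type*}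
    (equiv : S → S → Prop) (nsp πx πy : T → T) (beh_x beh_y beh_xy : S → T)
    (hx : ∀ σ, beh_x σ = πx (beh_xy σ))
    (hy : ∀ σ, beh_y σ = πy (beh_xy σ))
    (hnx : ∀ σ, nsp (beh_x σ) = nsp (beh_xy σ))
    (hny : ∀ σ, nsp (beh_y σ) = nsp (beh_xy σ)) :
    SNI equiv nsp beh_xy → SNI equiv nsp beh_x ∧ SNI equiv nsp beh_y := by
  intro h
  constructor
  · intro σ1 σ2 he hn
    have := h σ1 σ2 he (by rw [← hnx, ← hnx, hn])
    rw [hx, hx, this]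
  · intro σ1 σ2 he hn
    have := h σ1 σ2 he (by rw [← hny, ← hny, hn])
    rw [hy, hy, this]
end

section
/- The two projections of a composed trace commute with the full non-speculative projection: for a well-nested composed trace, removing all x-transactions and then all y-transactions yields the same result as removing all y-transactions and then all x-transactions, and both equal the non-speculative projection that removes all transactions of either kind. -/
/-- Observations of the composed trace model: start/rollback markers for x-transactions
    and y-transactions, plus ordinary observations. -/
inductive Obs2 where
  | startx : ℕ → Obs2
  | rollbackx : ℕ → Obs2
  | starty : ℕ → Obs2
  | rollbacky : ℕ → Obs2
  | ord : ℕ → Obs2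
  deriving DecidableEq

/-- Auxiliary x-projection: removes y-transactions (segments between a `starty n` and its
    matching `rollbacky n`, inclusive), tracking the y-nesting depth. -/
def pxAux : ℕ → List Obs2 → List Obs2
  | _, [] => []
  | 0, (Obs2.starty _) :: t => pxAux 1 t
  | 0, o :: t => o :: pxAux 0 t
  | (d+1), (Obs2.starty _) :: t => pxAux (d+2) t
  | (d+1), (Obs2.rollbacky _) :: t => pxAux d t
  | (d+1), _ :: t => pxAux (d+1) t

/-- The projection onto x-observations: removes all y-transactions. -/
def px (t : List Obs2) : List Obs2 := pxAux 0 t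

/-- Auxiliary y-projection: removes x-transactions. -/
def pyAux : ℕ → List Obs2 → List Obs2
  | _, [] => []
  | 0, (Obs2.startx _) :: t => pyAux 1 t
  | 0, o :: t => o :: pyAux 0 t
  | (d+1), (Obs2.startx _) :: t => pyAux (d+2) t
  | (d+1), (Obs2.rollbackx _) :: t => pyAux d t
  | (d+1), _ :: t => pyAux (d+1) t

/-- The projection onto y-observations: removes all x-transactions. -/
def py (t : List Obs2) : List Obs2 := pyAux 0 t

/-- Auxiliary non-speculative projection: removes transactions of either kind. -/
def nsp2Aux : ℕ → List Obs2 → List Obs2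
  | _, [] => []
  | 0, (Obs2.startx _) :: t => nsp2Aux 1 t
  | 0, (Obs2.starty _) :: t => nsp2Aux 1 t
  | 0, o :: t => o :: nsp2Aux 0 t
  | (d+1), (Obs2.startx _) :: t => nsp2Aux (d+2) t
  | (d+1), (Obs2.starty _) :: t => nsp2Aux (d+2) t
  | (d+1), (Obs2.rollbackx _) :: t => nsp2Aux d t
  | (d+1), (Obs2.rollbacky _) :: t => nsp2Aux d t
  | (d+1), _ :: t => nsp2Aux (d+1) t

/-- The non-speculative projection: removes all transactions of either kind. -/
def nsp2 (t : List Obs2) : List Obs2 := nsp2Aux 0 t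

/-- Well-nested composed traces: markers are balanced and properly matched, and
    transactions of the two kinds may be nested but not interleaved. -/
inductive WellNested2 : List Obs2 → Prop where
  | nil : WellNested2 []
  | ord (o : ℕ) {t : List Obs2} : WellNested2 t → WellNested2 (Obs2.ord o :: t)
  | transx (n : ℕ) {inner t : List Obs2} : WellNested2 inner → WellNested2 t →
      WellNested2 (Obs2.startx n :: (inner ++ Obs2.rollbackx n :: t))
  | transy (n : ℕ) {inner t : List Obs2} : WellNested2 inner → WellNested2 t →
      WellNested2 (Obs2.starty n :: (inner ++ Obs2.rollbacky n :: t))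

lemma pxAux_skip {s : List Obs2} (h : WellNested2 s) :
    ∀ d t, pxAux (d+1) (s ++ t) = pxAux (d+1) t := by
  induction h with
  | nil => intro d t; rfl
  | ord o h ih => intro d t; simpa [pxAux] using ih d t
  | @transx n inner t0 hi ht ihi iht =>
      intro d t
      simp only [List.cons_append, List.append_assoc, List.append_eq, pxAux]
      rw [ihi]
      simpa [pxAux] using iht d t
  | @transy n inner t0 hi ht ihi iht =>
      intro d t
      simp only [List.cons_append, List.append_assoc, List.append_eq, pxAux]
      rw [ihi]
      simpa [pxAux] using iht d t

lemma pyAux_skip {s : List Obs2} (h : WellNested2 s) :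
    ∀ d t, pyAux (d+1) (s ++ t) = pyAux (d+1) t := by
  induction h with
  | nil => intro d t; rfl
  | ord o h ih => intro d t; simpa [pyAux] using ih d t
  | @transx n inner t0 hi ht ihi iht =>
      intro d t
      simp only [List.cons_append, List.append_assoc, List.append_eq, pyAux]
      rw [ihi]
      simpa [pyAux] using iht d t
  | @transy n inner t0 hi ht ihi iht =>
      intro d t
      simp only [List.cons_append, List.append_assoc, List.append_eq, pyAux]
      rw [ihi]
      simpa [pyAux] using iht d t

lemma nsp2Aux_skip {s : List Obs2} (h : WellNested2 s) :
    ∀ d t, nsp2Aux (d+1) (s ++ t) = nsp2Aux (d+1) t := by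
  induction h with
  | nil => intro d t; rfl
  | ord o h ih => intro d t; simpa [nsp2Aux] using ih d t
  | @transx n inner t0 hi ht ihi iht =>
      intro d t
      simp only [List.cons_append, List.append_assoc, List.append_eq, nsp2Aux]
      rw [ihi]
      simpa [nsp2Aux] using iht d t
  | @transy n inner t0 hi ht ihi iht =>
      intro d t
      simp only [List.cons_append, List.append_assoc, List.append_eq, nsp2Aux]
      rw [ihi]
      simpa [nsp2Aux] using iht d t

lemma pxAux_split {s : List Obs2} (h : WellNested2 s) :
    ∀ t, pxAux 0 (s ++ t) = pxAux 0 s ++ pxAux 0 t := by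
  induction h with
  | nil => intro t; rfl
  | ord o h ih => intro t; simp [pxAux, ih]
  | @transx n inner t0 hi ht ihi iht =>
      intro t
      simp only [List.cons_append, List.append_assoc, List.append_eq, pxAux]
      rw [ihi, ihi (Obs2.rollbackx n :: _)]
      simp [pxAux, iht]
  | @transy n inner t0 hi ht ihi iht =>
      intro t
      simp only [List.cons_append, List.append_assoc, List.append_eq, pxAux]
      rw [pxAux_skip hi, pxAux_skip hi]
      simp [pxAux, iht]

lemma pyAux_split {s : List Obs2} (h : WellNested2 s) :
    ∀ t, pyAux 0 (s ++ t) = pyAux 0 s ++ pyAux 0 t := by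
  induction h with
  | nil => intro t; rfl
  | ord o h ih => intro t; simp [pyAux, ih]
  | @transy n inner t0 hi ht ihi iht =>
      intro t
      simp only [List.cons_append, List.append_assoc, List.append_eq, pyAux]
      rw [ihi, ihi (Obs2.rollbacky n :: _)]
      simp [pyAux, iht]
  | @transx n inner t0 hi ht ihi iht =>
      intro t
      simp only [List.cons_append, List.append_assoc, List.append_eq, pyAux]
      rw [pyAux_skip hi, pyAux_skip hi]
      simp [pyAux, iht]

lemma px_wn {s : List Obs2} (h : WellNested2 s) : WellNested2 (px s) := by
  induction h with
  | nil => exact WellNested2.nil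
  | ord o h ih => simpa [px, pxAux] using WellNested2.ord o ih
  | @transx n inner t0 hi ht ihi iht =>
      have : px (Obs2.startx n :: (inner ++ Obs2.rollbackx n :: t0)) =
          Obs2.startx n :: (px inner ++ Obs2.rollbackx n :: px t0) := by
        simp [px, pxAux, pxAux_split hi]
      rw [this]
      exact WellNested2.transx n ihi iht
  | @transy n inner t0 hi ht ihi iht =>
      have : px (Obs2.starty n :: (inner ++ Obs2.rollbacky n :: t0)) = px t0 := by
        simp [px, pxAux, pxAux_skip hi]
      rw [this]
      exact iht

lemma py_wn {s : List Obs2} (h : WellNested2 s) : WellNested2 (py s) := by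
  induction h with
  | nil => exact WellNested2.nil
  | ord o h ih => simpa [py, pyAux] using WellNested2.ord o ih
  | @transy n inner t0 hi ht ihi iht =>
      have : py (Obs2.starty n :: (inner ++ Obs2.rollbacky n :: t0)) =
          Obs2.starty n :: (py inner ++ Obs2.rollbacky n :: py t0) := by
        simp [py, pyAux, pyAux_split hi]
      rw [this]
      exact WellNested2.transy n ihi iht
  | @transx n inner t0 hi ht ihi iht =>
      have : py (Obs2.startx n :: (inner ++ Obs2.rollbackx n :: t0)) = py t0 := by
        simp [py, pyAux, pyAux_skip hi]
      rw [this]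
      exact iht

/-- The two projections of a well-nested composed trace commute, and both compositions
    equal the non-speculative projection removing all transactions of either kind. -/
theorem proj_commute (t : List Obs2) (h : WellNested2 t) :
    py (px t) = nsp2 t ∧ px (py t) = nsp2 t ∧ py (px t) = px (py t) := by
  have main : ∀ {t : List Obs2}, WellNested2 t → py (px t) = nsp2 t ∧ px (py t) = nsp2 t := by
    intro t h
    induction h with
    | nil => exact ⟨rfl, rfl⟩
    | ord o h ih =>
        constructor
        · simpa [px, py, nsp2, pxAux, pyAux, nsp2Aux] using ih.1
        · simpa [px, py, nsp2, pxAux, pyAux, nsp2Aux] using ih.2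
    | @transx n inner t0 hi ht ihi iht =>
        constructor
        · have hpx : px (Obs2.startx n :: (inner ++ Obs2.rollbackx n :: t0)) =
              Obs2.startx n :: (px inner ++ Obs2.rollbackx n :: px t0) := by
            simp [px, pxAux, pxAux_split hi]
          rw [hpx]
          have : py (Obs2.startx n :: (px inner ++ Obs2.rollbackx n :: px t0)) = py (px t0) := by
            simp [py, pyAux, pyAux_skip (px_wn hi)]
          rw [this, iht.1]
          simp [nsp2, nsp2Aux, nsp2Aux_skip hi]
        · have hpy : py (Obs2.startx n :: (inner ++ Obs2.rollbackx n :: t0)) = py t0 := by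
            simp [py, pyAux, pyAux_skip hi]
          rw [hpy, iht.2]
          simp [nsp2, nsp2Aux, nsp2Aux_skip hi]
    | @transy n inner t0 hi ht ihi iht =>
        constructor
        · have hpx : px (Obs2.starty n :: (inner ++ Obs2.rollbacky n :: t0)) = px t0 := by
            simp [px, pxAux, pxAux_skip hi]
          rw [hpx, iht.1]
          simp [nsp2, nsp2Aux, nsp2Aux_skip hi]
        · have hpy : py (Obs2.starty n :: (inner ++ Obs2.rollbacky n :: t0)) =
              Obs2.starty n :: (py inner ++ Obs2.rollbacky n :: py t0) := by
            simp [py, pyAux, pyAux_split hi]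
          rw [hpy]
          have : px (Obs2.starty n :: (py inner ++ Obs2.rollbacky n :: py t0)) = px (py t0) := by
            simp [px, pxAux, pxAux_skip (py_wn hi)]
          rw [this, iht.2]
          simp [nsp2, nsp2Aux, nsp2Aux_skip hi]
  obtain ⟨h1, h2⟩ := main h
  exact ⟨h1, h2, h1.trans h2.symm⟩
end

section
/- If the always-mispredict behavior of a program overapproximates every oracle behavior in the sense that equality of AM traces implies equality of oracle traces (for any oracle), and non-speculative projections coincide, then SNI under the AM semantics implies SNI under every oracle semantics. -/
/-- If the always-mispredict behavior overapproximates every oracle behavior (equality of AM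
    traces implies equality of oracle traces) and the non-speculative projections coincide,
    then SNI under the AM semantics implies SNI under every oracle semantics. -/
theorem SNI_oracle_of_SNI_am {S T O : Type*}
    (equiv : S → S → Prop) (nsp : T → T)
    (beh_am : S → T) (beh_oracle : O → S → T)
    (h1 : ∀ (o : O) σ1 σ2, beh_am σ1 = beh_am σ2 → beh_oracle o σ1 = beh_oracle o σ2)
    (h2 : ∀ (o : O) σ, nsp (beh_oracle o σ) = nsp (beh_am σ)) :
    SNI equiv nsp beh_am → ∀ o : O, SNI equiv nsp (beh_oracle o) := by
  intro ham o σ1 σ2 heq hnsp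
  apply h1
  apply ham _ _ heq
  rw [← h2 o, ← h2 o]
  exact hnsp
end
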